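/- arXiv:1912.07171 — 5 statements merged into one kernel-verified Lean document; each statement's English description precedes it below -/
import Mathlib

section
/- For every positive integer k, there exists a polynomial g in two variables with rational coefficients such that g(0,0) = 0 and, for every natural number n, S_k(n) = g(S_1(n), S_2(n)). -/
/-- `S k n = ∑_{m=1}^n m^k` as a rational number. -/
def S (k n : ℕ) : ℚ := ∑ m ∈ Finset.Icc 1 n, (m : ℚ) ^ k

/-!
With `u = X (X + 1)` and `v = 2 X + 1` one has `u(n) = 2 S₁(n)` and `u(n) v(n) = 6 S₂(n)`, so the
values at `n` of `u ^ j` and `v u ^ j` (`j ≥ 1`) lie in `ℚ[S₁, S₂]`. These polynomials `W` have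
every degree `m ≥ 2` and satisfy `W(0) = W(-1)`, so their backward differences `W(X) - W(X - 1)`
have every degree `k ≥ 1` and vanish at `0`, while their sums over `1, …, n` telescope to
`W(n) - W(0)`. By triangularity in the degree every `S_k` with `k ≥ 1` lies in `ℚ[S₁, S₂]`, and any
`g` with `S_k = g(S₁, S₂)` has `g(0, 0) = S_k(0) = 0`.
-/

open Finset Polynomial

namespace Polynomial

variable {R : Type*} [CommRing R]

lemma hasseDeriv_eq_C_coeff_of_natDegree_le {p : R[X]} {n : ℕ} (h : p.natDegree ≤ n) :
    hasseDeriv n p = C (p.coeff n) := by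
  rw [eq_C_of_natDegree_le_zero ((natDegree_hasseDeriv_le p n).trans (by omega)), hasseDeriv_coeff]
  simp

lemma natDegree_sub_taylor_le {p : R[X]} {m : ℕ} (r : R) (h : p.natDegree ≤ m + 1) :
    (p - taylor r p).natDegree ≤ m := by
  rw [natDegree_le_iff_coeff_eq_zero]
  intro N hN
  rw [coeff_sub, taylor_coeff, hasseDeriv_eq_C_coeff_of_natDegree_le (by omega), eval_C, sub_self]

lemma coeff_sub_taylor {p : R[X]} {m : ℕ} (r : R) (h : p.natDegree ≤ m + 1) :
    (p - taylor r p).coeff m = -((m + 1) * r * p.coeff (m + 1)) := by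
  have hlin : (hasseDeriv m p).natDegree ≤ 1 := (natDegree_hasseDeriv_le p m).trans (by omega)
  rw [coeff_sub, taylor_coeff, eq_X_add_C_of_natDegree_le_one hlin]
  simp only [eval_add, eval_mul, eval_C, eval_X, hasseDeriv_coeff, zero_add, add_comm 1 m,
    Nat.choose_self, Nat.choose_succ_self_right]
  push_cast
  ring

noncomputable def partialSum : R[X] →ₗ[R] ℕ → R :=
  LinearMap.pi fun n => ∑ m ∈ Icc 1 n, leval (m : R)

lemma partialSum_apply (p : R[X]) (n : ℕ) :
    partialSum p n = ∑ m ∈ Icc 1 n, p.eval (m : R) := by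
  simp [partialSum]

lemma partialSum_sub_taylor (p : R[X]) (n : ℕ) :
    partialSum (p - taylor (-1) p) n = p.eval (n : R) - p.eval 0 := by
  induction n with
  | zero => simp [partialSum_apply]
  | succ n ih =>
    rw [partialSum_apply, sum_Icc_succ_top (by omega), ← partialSum_apply, ih]
    simp [taylor_eval]

lemma X_pow_mem_of_coeff_ne_zero {K : Type*} [Field K] (V : Submodule K K[X]) {k : ℕ} {q : K[X]}
    (hq : q ∈ V) (hdeg : q.natDegree ≤ k) (h0 : q.coeff 0 = 0) (hk : q.coeff k ≠ 0)
    (hlt : ∀ i, 0 < i → i < k → X ^ i ∈ V) : X ^ k ∈ V := by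
  have hsum : q = ∑ i ∈ range k, q.coeff i • X ^ i + q.coeff k • X ^ k := by
    conv_lhs => rw [as_sum_range' q (k + 1) (by omega)]
    simp only [sum_range_succ, smul_X_eq_monomial]
  have hlow : ∑ i ∈ range k, q.coeff i • X ^ i ∈ V := sum_mem fun i hi => by
    rcases Nat.eq_zero_or_pos i with rfl | hi0
    · simp [h0]
    · exact V.smul_mem _ (hlt i hi0 (mem_range.mp hi))
  rw [← V.smul_mem_iff hk, eq_sub_of_add_eq' hsum.symm]
  exact V.sub_mem hq hlow

end Polynomial

lemma MvPolynomial.aeval_pi_apply {σ ι R : Type*} [CommSemiring R] (x : σ → ι → R)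
    (g : MvPolynomial σ R) (i : ι) : aeval x g i = eval (fun s => x s i) g := by
  simpa using congrArg (· g) (MvPolynomial.comp_aeval x (Pi.evalAlgHom R (fun _ => R) i))

lemma S_one_eq (n : ℕ) : S 1 n = n * (n + 1) / 2 := by
  induction n with
  | zero => simp [S]
  | succ n ih =>
    rw [S, sum_Icc_succ_top (by omega), ← S, ih]
    push_cast; ring

lemma S_two_eq (n : ℕ) : S 2 n = n * (n + 1) * (2 * n + 1) / 6 := by
  induction n with
  | zero => simp [S]
  | succ n ih =>
    rw [S, sum_Icc_succ_top (by omega), ← S, ih]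
    push_cast; ring

local notation "𝒜" => Algebra.adjoin ℚ (Set.range ![S 1, S 2])

lemma exists_natDegree_eq_eval_mem (m : ℕ) (hm : 2 ≤ m) :
    ∃ W : ℚ[X], W.natDegree = m ∧ W.eval (-1) = W.eval 0 ∧
      (fun n : ℕ => W.eval (n : ℚ)) ∈ 𝒜 := by
  have h1 : S 1 ∈ 𝒜 := Algebra.subset_adjoin ⟨0, rfl⟩
  have h2 : S 2 ∈ 𝒜 := Algebra.subset_adjoin ⟨1, rfl⟩
  obtain ⟨j, rfl | rfl⟩ := Nat.even_or_odd' m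
  · refine ⟨(X * (X + 1)) ^ j, by compute_degree! <;> omega,
      by simp [zero_pow (by omega : j ≠ 0)], ?_⟩
    have : (fun n : ℕ => ((X * (X + 1)) ^ j : ℚ[X]).eval (n : ℚ)) = (2 • S 1) ^ j := by
      ext n
      simp only [Pi.pow_apply, Pi.smul_apply, eval_pow, eval_mul, eval_add, eval_X, eval_one,
        S_one_eq]
      ring
    rw [this]
    exact pow_mem (Subalgebra.smul_mem _ h1 _) _
  · obtain ⟨i, rfl⟩ : ∃ i, j = i + 1 := ⟨j - 1, by omega⟩
    refine ⟨(2 * X + 1) * (X * (X + 1)) ^ (i + 1), by compute_degree! <;> omega, by simp, ?_⟩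
    have : (fun n : ℕ => ((2 * X + 1) * (X * (X + 1)) ^ (i + 1) : ℚ[X]).eval (n : ℚ))
        = 6 • S 2 * (2 • S 1) ^ i := by
      ext n
      simp only [Pi.pow_apply, Pi.mul_apply, Pi.smul_apply, eval_pow, eval_mul, eval_add, eval_X,
        eval_one, eval_ofNat, S_one_eq, S_two_eq]
      ring
    rw [this]
    exact mul_mem (Subalgebra.smul_mem _ h2 _) (pow_mem (Subalgebra.smul_mem _ h1 _) _)

lemma S_mem_adjoin {k : ℕ} (hk : 0 < k) : S k ∈ 𝒜 := by
  let V := (𝒜).toSubmodule.comap partialSum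
  suffices X ^ k ∈ V by
    have hX : partialSum (X ^ k : ℚ[X]) = S k := by ext n; simp [partialSum_apply, S]
    simpa [V, hX] using this
  induction k using Nat.strong_induction_on with
  | _ k ih =>
    obtain ⟨W, hdeg, hW, hWA⟩ := exists_natDegree_eq_eval_mem (k + 1) (by omega)
    refine X_pow_mem_of_coeff_ne_zero V (q := W - taylor (-1) W) ?_
      (natDegree_sub_taylor_le _ hdeg.le) ?_ ?_ fun i hi hik => ih i hik hi
    · have : partialSum (W - taylor (-1) W)
          = (fun n : ℕ => W.eval (n : ℚ)) - algebraMap ℚ _ (W.eval 0) := by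
        ext n; simp [partialSum_sub_taylor]
      show partialSum (W - taylor (-1) W) ∈ 𝒜
      rw [this]
      exact sub_mem hWA (Subalgebra.algebraMap_mem _ _)
    · rw [coeff_sub, taylor_coeff_zero, coeff_zero_eq_eval_zero, hW, sub_self]
    · rw [coeff_sub_taylor _ hdeg.le, ← hdeg, coeff_natDegree]
      exact neg_ne_zero.mpr (mul_ne_zero (mul_ne_zero (by positivity) (by norm_num))
        (leadingCoeff_ne_zero.mpr (ne_zero_of_natDegree_gt (n := 0) (by omega))))

theorem power_sum_poly_of_S1_S2 (k : ℕ) (hk : 0 < k) :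
    ∃ g : MvPolynomial (Fin 2) ℚ,
      MvPolynomial.eval (fun _ => (0 : ℚ)) g = 0 ∧
      ∀ n : ℕ, S k n = MvPolynomial.eval ![S 1 n, S 2 n] g := by
  have hmem := S_mem_adjoin hk
  rw [Algebra.adjoin_range_eq_range_aeval] at hmem
  obtain ⟨g, hg⟩ := (AlgHom.mem_range _).mp hmem
  have hS : ∀ n, S k n = MvPolynomial.eval ![S 1 n, S 2 n] g := fun n => by
    rw [← hg, MvPolynomial.aeval_pi_apply]
    congr; ext i; fin_cases i <;> rfl
  refine ⟨g, ?_, hS⟩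
  have h0 : (fun _ => (0 : ℚ)) = ![S 1 0, S 2 0] := by ext i; fin_cases i <;> simp [S]
  rw [h0, ← hS]
  simp [S]
end

section
/- For every positive integer r, there exist rational numbers d_r, d_{r+1}, ..., d_{2r-1} such that for every natural number n, S_{2r+1}(n) = ((r+1)/2) * (S_r(n)^2 - \sum_{i=r}^{2r-1} d_i * S_i(n)). -/
open Finset

lemma S_faulhaber (p n : ℕ) :
    S p n = ∑ i ∈ range (p + 1),
      bernoulli' i * ((p + 1).choose i) * (n : ℚ) ^ (p + 1 - i) / (p + 1) := by
  rw [S, show Icc 1 n = Ico 1 (n + 1) by rfl]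
  exact sum_Ico_pow n p

lemma S_succ (k n : ℕ) : S k (n + 1) = S k n + ((n : ℚ) + 1) ^ k := by
  rw [S, S, Finset.sum_Icc_succ_top (Nat.le_add_left 1 n)]
  push_cast; ring

/-- The "tail" of the Faulhaber expansion. -/
def A (p m : ℕ) : ℚ :=
  ∑ i ∈ range p, bernoulli' (i + 2) * ((p + 2).choose (i + 2)) * (m : ℚ) ^ (p - i)

lemma S_eq (p m : ℕ) :
    S (p + 1) m = (m : ℚ) ^ (p + 2) / ((p : ℚ) + 2) + (m : ℚ) ^ (p + 1) / 2
      + A p m / ((p : ℚ) + 2) := by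
  have hR : ((p : ℚ) + 2) ≠ 0 := by positivity
  rw [S_faulhaber]
  rw [show p + 1 + 1 = p + 1 + 1 from rfl, Finset.sum_range_succ', Finset.sum_range_succ']
  have hf : (∑ i ∈ range p, bernoulli' (i + 1 + 1) * ((p + 1 + 1).choose (i + 1 + 1))
        * (m : ℚ) ^ (p + 1 + 1 - (i + 1 + 1)) / (((p : ℕ) + 1 : ℕ) + 1 : ℚ))
      = A p m / ((p : ℚ) + 2) := by
    rw [A, Finset.sum_div]
    refine Finset.sum_congr rfl fun i hi => ?_
    simp only [mem_range] at hi
    rw [show p + 1 + 1 - (i + 1 + 1) = p - i by omega]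
    push_cast
    ring
  rw [hf]
  rw [show (0 : ℕ) + 1 = 1 from rfl, bernoulli'_one, bernoulli'_zero,
    Nat.choose_zero_right, Nat.choose_one_right,
    show p + 1 + 1 - 1 = p + 1 by omega, show p + 1 + 1 - 0 = p + 2 by omega]
  push_cast
  field_simp
  ring

lemma key (r : ℕ) (hr : 0 < r) :
    ∃ d : ℕ → ℚ, ∀ m : ℕ,
      ((r : ℚ) + 1) * ((m : ℚ) ^ r * (2 * S r m - (m : ℚ) ^ r)) =
        2 * (m : ℚ) ^ (2 * r + 1) +
          ((r : ℚ) + 1) * ∑ j ∈ Icc r (2 * r - 1), d j * (m : ℚ) ^ j := by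
  obtain ⟨p, rfl⟩ : ∃ p, r = p + 1 := ⟨r - 1, by omega⟩
  refine ⟨fun j => if j = p + 1 then 0 else
    2 * bernoulli' (2 * (p + 1) + 1 - j) * ((p + 2).choose (2 * (p + 1) + 1 - j))
      / ((p : ℚ) + 2), fun m => ?_⟩
  have hR : ((p : ℚ) + 2) ≠ 0 := by positivity
  have hsum : ∑ j ∈ Icc (p + 1) (2 * (p + 1) - 1), (if j = p + 1 then 0 else
      2 * bernoulli' (2 * (p + 1) + 1 - j) * ((p + 2).choose (2 * (p + 1) + 1 - j))
        / ((p : ℚ) + 2)) * (m : ℚ) ^ j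
      = 2 * (m : ℚ) ^ (p + 1) * A p m / ((p : ℚ) + 2) := by
    rw [show Icc (p + 1) (2 * (p + 1) - 1) = insert (p + 1) (Icc (p + 2) (2 * p + 1)) by
      ext x; simp only [mem_Icc, mem_insert]; omega]
    rw [sum_insert (by simp [Finset.mem_Icc])]
    rw [if_pos rfl, zero_mul, zero_add]
    rw [← Finset.Ico_add_one_right_eq_Icc, Finset.sum_Ico_eq_sum_range,
      show 2 * p + 1 + 1 - (p + 2) = p by omega]
    rw [A, mul_div_assoc, Finset.sum_div, Finset.mul_sum]
    rw [← Finset.sum_range_reflect]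
    refine Finset.sum_congr rfl fun i hi => ?_
    simp only [mem_range] at hi
    rw [if_neg (by omega)]
    rw [show 2 * (p + 1) + 1 - (p + 2 + (p - 1 - i)) = i + 2 by omega,
      show p + 2 + (p - 1 - i) = 2 * p + 1 - i by omega]
    rw [show (m : ℚ) ^ (2 * p + 1 - i) = (m : ℚ) ^ (p + 1) * (m : ℚ) ^ (p - i) by
      rw [← pow_add]; congr 1; omega]
    ring
  rw [hsum, show S (p + 1) m = _ from S_eq p m]
  rw [show (m : ℚ) ^ (2 * (p + 1) + 1) = (m : ℚ) ^ (p + 1) * (m : ℚ) ^ (p + 2) by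
    rw [← pow_add]; congr 1; omega]
  push_cast
  field_simp
  ring

theorem odd_power_sum_recursion (r : ℕ) (hr : 0 < r) :
    ∃ d : ℕ → ℚ, ∀ n : ℕ,
      S (2 * r + 1) n =
        ((r : ℚ) + 1) / 2 *
          ((S r n) ^ 2 - ∑ i ∈ Finset.Icc r (2 * r - 1), d i * S i n) := by
  obtain ⟨d, hd⟩ := key r hr
  refine ⟨d, fun n => ?_⟩
  induction n with
  | zero => simp [S]
  | succ n ih =>
      have hkey := hd (n + 1)
      have hm : ((n + 1 : ℕ) : ℚ) = (n : ℚ) + 1 := by push_cast; ring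
      rw [hm, S_succ] at hkey
      rw [S_succ, S_succ]
      have hsum : ∑ i ∈ Finset.Icc r (2 * r - 1), d i * S i (n + 1)
          = (∑ i ∈ Finset.Icc r (2 * r - 1), d i * S i n)
            + ∑ i ∈ Finset.Icc r (2 * r - 1), d i * ((n : ℚ) + 1) ^ i := by
        rw [← Finset.sum_add_distrib]
        exact Finset.sum_congr rfl fun i _ => by rw [S_succ]; ring
      rw [hsum]
      linear_combination ih - (1/2 : ℚ) * hkey
end

section
/- For every positive integer r, there exist rational numbers d_r, d_{r+1}, ..., d_{2r+1} with d_{2r+1} = 2/(r+1) and d_{2r} = 0 such that for every natural number n, S_r(n)^2 = \sum_{i=r}^{2r+1} d_i * S_i(n). -/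
/-!
Since `S r (m + 1) ^ 2 - S r m ^ 2 = 2 (m + 1) ^ r S r (m + 1) - (m + 1) ^ (2 r)`, it suffices to
write `2 x ^ r S r x - x ^ (2 r)` as a combination of the monomials `x ^ i`, `r ≤ i ≤ 2 r + 1`, and
sum over `x = 1, …, n`. Faulhaber's formula makes `2 x ^ r S r x` a polynomial with monomials
`x ^ (r + 1), …, x ^ (2 r + 1)`, leading coefficient `2 / (r + 1)` and coefficient `2 B'₁ = 1` at
`x ^ (2 r)`, which cancels against `- x ^ (2 r)` as soon as `2 r > r`.
-/

open Finset

lemma S_zero (k : ℕ) : S k 0 = 0 := by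
  simp [S]

lemma eq_sum_mul_S_of_sub_eq {f : ℕ → ℚ} (s : Finset ℕ) (d : ℕ → ℚ) (h0 : f 0 = 0)
    (hsucc : ∀ n : ℕ, f (n + 1) - f n = ∑ i ∈ s, d i * ((n : ℚ) + 1) ^ i) (n : ℕ) :
    f n = ∑ i ∈ s, d i * S i n := by
  induction n with
  | zero => simp [h0, S_zero]
  | succ n ih =>
    simp only [S_succ, mul_add, sum_add_distrib, ← ih, ← hsucc]
    ring

/-- The coefficient of `m ^ i` in the polynomial `2 m ^ r S r m` given by Faulhaber's formula. -/
def twoPowMulSCoeff (r i : ℕ) : ℚ :=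
  2 * bernoulli' (2 * r + 1 - i) * (r + 1).choose (2 * r + 1 - i) / (r + 1)

lemma two_mul_pow_mul_S (r m : ℕ) :
    2 * (m : ℚ) ^ r * S r m = ∑ i ∈ Ioc r (2 * r + 1), twoPowMulSCoeff r i * (m : ℚ) ^ i := by
  rw [S, ← Ico_add_one_right_eq_Icc, sum_Ico_pow, mul_sum]
  refine sum_nbij' (fun k ↦ 2 * r + 1 - k) (fun i ↦ 2 * r + 1 - i) ?_ ?_ ?_ ?_ ?_
  iterate 4 (· intro k hk; simp only [mem_range, mem_Ioc] at hk ⊢; omega)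
  intro k hk
  rw [mem_range] at hk
  have hpow : (m : ℚ) ^ (2 * r + 1 - k) = (m : ℚ) ^ r * (m : ℚ) ^ (r + 1 - k) := by
    rw [← pow_add]; congr 1; omega
  rw [twoPowMulSCoeff, Nat.sub_sub_self (by omega), hpow]
  ring

lemma twoPowMulSCoeff_two_mul (r : ℕ) : twoPowMulSCoeff r (2 * r) = 1 := by
  rw [twoPowMulSCoeff, Nat.add_sub_cancel_left, bernoulli'_one, Nat.choose_one_right]
  push_cast
  field_simp

lemma twoPowMulSCoeff_two_mul_add_one (r : ℕ) :
    twoPowMulSCoeff r (2 * r + 1) = 2 / ((r : ℚ) + 1) := by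
  simp [twoPowMulSCoeff]

def sqSCoeff (r i : ℕ) : ℚ :=
  if i ∈ (Ioc r (2 * r + 1)).erase (2 * r) then twoPowMulSCoeff r i else 0

lemma sum_sqSCoeff_mul_pow {r : ℕ} (hr : 0 < r) (x : ℚ) :
    ∑ i ∈ Icc r (2 * r + 1), sqSCoeff r i * x ^ i
      = ∑ i ∈ Ioc r (2 * r + 1), twoPowMulSCoeff r i * x ^ i - x ^ (2 * r) := by
  have hsub : (Ioc r (2 * r + 1)).erase (2 * r) ⊆ Icc r (2 * r + 1) :=
    (erase_subset _ _).trans Ioc_subset_Icc_self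
  have hmem : 2 * r ∈ Ioc r (2 * r + 1) := by rw [mem_Ioc]; omega
  simp only [sqSCoeff, ite_mul, zero_mul, sum_ite_mem, inter_eq_right.mpr hsub]
  rw [← add_sum_erase _ _ hmem, twoPowMulSCoeff_two_mul]
  ring

theorem sq_power_sum_expansion (r : ℕ) (hr : 0 < r) :
    ∃ d : ℕ → ℚ,
      d (2 * r + 1) = 2 / ((r : ℚ) + 1) ∧
      d (2 * r) = 0 ∧
      ∀ n : ℕ, (S r n) ^ 2 = ∑ i ∈ Finset.Icc r (2 * r + 1), d i * S i n := by
  refine ⟨sqSCoeff r, ?_, by simp [sqSCoeff], ?_⟩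
  · have hmem : 2 * r + 1 ∈ (Ioc r (2 * r + 1)).erase (2 * r) := by
      rw [mem_erase, mem_Ioc]; omega
    rw [sqSCoeff, if_pos hmem, twoPowMulSCoeff_two_mul_add_one]
  · refine eq_sum_mul_S_of_sub_eq _ _ (by simp [S_zero]) fun n ↦ ?_
    have hfaulhaber := two_mul_pow_mul_S r (n + 1)
    push_cast at hfaulhaber
    rw [sum_sqSCoeff_mul_pow hr, ← hfaulhaber, S_succ, pow_mul']
    ring
end

section
/- For every even positive integer k, there exists a polynomial f in one variable with rational coefficients such that S_k(n) = S_2(n) * f(S_1(n)) for every natural number n. -/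
namespace Faul
open Polynomial

/-- `u m = m(m+1)/2`. -/
def u (m : ℚ) : ℚ := m * (m + 1) / 2

noncomputable def e2 : ℚ[X] := Polynomial.C (1/4 : ℚ) * (X ^ 2 - X)

/-- two-term recursive sequence with initial values `a`, `b`. -/
noncomputable def rec2 (a b : ℚ[X]) : ℕ → ℚ[X]
  | 0 => a
  | 1 => b
  | (j+2) => X * rec2 a b (j+1) - e2 * rec2 a b j

noncomputable def P : ℕ → ℚ[X] := rec2 (Polynomial.C 2) X
noncomputable def H : ℕ → ℚ[X] := rec2 1 X
noncomputable def D (j : ℕ) : ℚ[X] := Polynomial.C 2 * X * H j + P (j+1)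

lemma evalP : ∀ j : ℕ, ∀ m : ℚ, (P j).eval (m ^ 2) = u m ^ j + u (m - 1) ^ j := by
  intro j
  induction j using Nat.strong_induction_on with
  | _ j ih =>
    match j with
    | 0 => intro m; simp [P, rec2]; norm_num
    | 1 => intro m; simp [P, rec2, u]; ring
    | (j+2) =>
      intro m
      have h1 := ih (j+1) (by omega) m
      have h2 := ih j (by omega) m
      show (rec2 (Polynomial.C 2) X (j+2)).eval (m^2) = _
      rw [rec2]
      simp only [eval_sub, eval_mul, eval_X, e2, eval_C, eval_pow]
      rw [show rec2 (Polynomial.C 2) X (j+1) = P (j+1) from rfl,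
        show rec2 (Polynomial.C 2) X j = P j from rfl, h1, h2]
      simp only [u]
      ring

lemma evalH : ∀ j : ℕ, ∀ m : ℚ, m * (H j).eval (m ^ 2) = u m ^ (j+1) - u (m - 1) ^ (j+1) := by
  intro j
  induction j using Nat.strong_induction_on with
  | _ j ih =>
    match j with
    | 0 => intro m; simp [H, rec2, u]; ring
    | 1 => intro m; simp [H, rec2, u]; ring
    | (j+2) =>
      intro m
      have h1 := ih (j+1) (by omega) m
      have h2 := ih j (by omega) m
      show m * (rec2 1 X (j+2)).eval (m^2) = _
      rw [rec2]
      simp only [eval_sub, eval_mul, eval_X, e2, eval_C, eval_pow]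
      rw [show rec2 1 X (j+1) = H (j+1) from rfl, show rec2 1 X j = H j from rfl]
      have expand : m * (m ^ 2 * (H (j+1)).eval (m^2) - 1/4 * (((m^2)^2) - m^2) * (H j).eval (m^2))
          = m^2 * (m * (H (j+1)).eval (m^2)) - (1/4 * ((m^2)^2 - m^2)) * (m * (H j).eval (m^2)) := by
        ring
      rw [expand, h1, h2]
      simp only [u]
      ring

lemma evalD (j : ℕ) (m : ℚ) :
    (D j).eval (m ^ 2) = u m ^ (j+1) * (2*m+1) - u (m - 1) ^ (j+1) * (2*m-1) := by
  have h1 := evalH j m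
  have h2 := evalP (j+1) m
  simp only [D, eval_add, eval_mul, eval_C, eval_X]
  linear_combination 2 * m * h1 + h2

lemma telescope (j : ℕ) : ∀ n : ℕ,
    ∑ m ∈ Finset.Icc 1 n, (D j).eval ((m : ℚ) ^ 2) = u n ^ (j+1) * (2 * n + 1) := by
  intro n
  induction n with
  | zero => simp [u]
  | succ n ihn =>
    rw [Finset.sum_Icc_succ_top (by omega : 1 ≤ n + 1), ihn]
    push_cast
    rw [evalD j ((n : ℚ) + 1)]
    rw [show (n : ℚ) + 1 - 1 = n by ring]
    ring

lemma S1_eq (n : ℕ) : S 1 n = u n := by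
  induction n with
  | zero => simp [S, u]
  | succ n ihn =>
    rw [S, Finset.sum_Icc_succ_top (by omega : 1 ≤ n + 1), ← S, ihn]
    simp only [u]; push_cast; ring

lemma three_S2 (n : ℕ) : 3 * S 2 n = (2 * n + 1) * S 1 n := by
  have h2 : S 2 n = n * (n+1) * (2*n+1) / 6 := by
    induction n with
    | zero => simp [S]
    | succ n ihn =>
      rw [S, Finset.sum_Icc_succ_top (by omega : 1 ≤ n + 1), ← S, ihn]
      push_cast; ring
  rw [h2, S1_eq]; simp only [u]; ring

lemma telescope' (j n : ℕ) :
    ∑ m ∈ Finset.Icc 1 n, (D j).eval ((m : ℚ) ^ 2) = S 1 n ^ (j+1) * (2 * n + 1) := by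
  rw [telescope, S1_eq]

lemma deg_rec2 (a b : ℚ[X]) (ha : a.natDegree = 0) (hb : b = X) :
    ∀ j, (rec2 a b j).natDegree ≤ j := by
  intro j
  induction j using Nat.strong_induction_on with
  | _ j ih =>
    match j with
    | 0 => simpa [rec2] using ha.le
    | 1 => simp [rec2, hb]
    | (j+2) =>
      rw [rec2]
      refine (natDegree_sub_le _ _).trans ?_
      refine max_le ?_ ?_
      · refine (natDegree_mul_le).trans ?_
        have := ih (j+1) (by omega)
        simpa using by omega
      · refine (natDegree_mul_le).trans ?_
        have h1 := ih j (by omega)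
        have h2 : e2.natDegree ≤ 2 := by
          unfold e2
          refine (natDegree_mul_le).trans ?_
          simp
          refine (natDegree_sub_le _ _).trans ?_
          simp
        omega

lemma degP (j : ℕ) : (P j).natDegree ≤ j := deg_rec2 _ _ (by simp) rfl j
lemma degH (j : ℕ) : (H j).natDegree ≤ j := deg_rec2 _ _ (by simp) rfl j

lemma coeff_rec2_top (a b : ℚ[X]) (ha : a.natDegree = 0) (hb : b = X) (c : ℕ → ℚ)
    (h0 : a.coeff 0 = c 0) (h1 : c 1 = 1)
    (hrec : ∀ j, c (j+2) = c (j+1) - (1/4) * c j) :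
    ∀ j, (rec2 a b j).coeff j = c j := by
  intro j
  induction j using Nat.strong_induction_on with
  | _ j ih =>
    match j with
    | 0 => simpa [rec2] using h0
    | 1 => simp [rec2, hb, h1]
    | (j+2) =>
      rw [rec2]
      have he : e2 * rec2 a b j = Polynomial.C (1/4 : ℚ) * (X^2 * rec2 a b j)
          - Polynomial.C (1/4 : ℚ) * (X * rec2 a b j) := by
        rw [e2]; ring
      rw [coeff_sub, he, coeff_sub]
      have hXm : (X * rec2 a b (j+1)).coeff (j+2) = (rec2 a b (j+1)).coeff (j+1) :=
        coeff_X_mul _ _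
      have hX2 : (X^2 * rec2 a b j).coeff (j+2) = (rec2 a b j).coeff j :=
        coeff_X_pow_mul _ 2 j
      have hX1 : (X * rec2 a b j).coeff (j+2) = (rec2 a b j).coeff (j+1) :=
        coeff_X_mul _ _
      have hz : (rec2 a b j).coeff (j+1) = 0 :=
        coeff_eq_zero_of_natDegree_lt (by have := deg_rec2 a b ha hb j; omega)
      rw [hXm, coeff_C_mul, coeff_C_mul, hX2, hX1, hz, ih (j+1) (by omega), ih j (by omega),
        hrec j]
      ring

lemma coeffP (j : ℕ) : (P j).coeff j = 2 * (1/2) ^ j := by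
  refine coeff_rec2_top _ _ (by simp) rfl (fun j => 2 * (1/2)^j) (by simp) (by norm_num) ?_ j
  intro j; ring

lemma coeffH (j : ℕ) : (H j).coeff j = (j + 1) * (1/2) ^ j := by
  refine coeff_rec2_top _ _ (by simp) rfl (fun j => (j + 1) * (1/2)^j) (by simp) (by norm_num) ?_ j
  intro j; push_cast; ring

lemma coeffD_top (j : ℕ) : (D j).coeff (j+1) = (2 * j + 3) * (1/2) ^ j := by
  rw [D, coeff_add, mul_assoc, coeff_C_mul, coeff_X_mul, coeffH, coeffP]
  ring

lemma coeffD_top_ne (j : ℕ) : (D j).coeff (j+1) ≠ 0 := by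
  rw [coeffD_top]; positivity

lemma coeffD_zero (j : ℕ) : (D j).coeff 0 = 0 := by
  rw [coeff_zero_eq_eval_zero, show (0:ℚ) = 0^2 by norm_num, evalD j 0]
  simp [u]

lemma degD (j : ℕ) : (D j).natDegree < j + 2 := by
  have h1 : (Polynomial.C (2:ℚ) * X * H j).natDegree ≤ j + 1 := by
    refine natDegree_mul_le.trans ?_
    have := degH j
    have : (Polynomial.C (2:ℚ) * X).natDegree ≤ 1 := natDegree_mul_le.trans (by simp)
    omega
  have h2 := degP (j+1)
  have := natDegree_add_le (Polynomial.C (2:ℚ) * X * H j) (P (j+1))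
  rw [D]; omega

lemma sum_eval (j n : ℕ) :
    ∑ m ∈ Finset.Icc 1 n, (D j).eval ((m : ℚ) ^ 2)
      = ∑ i ∈ Finset.range (j+2), (D j).coeff i * S (2*i) n := by
  have step : ∀ m : ℚ, (D j).eval (m ^ 2)
      = ∑ i ∈ Finset.range (j+2), (D j).coeff i * m ^ (2*i) := by
    intro m
    rw [eval_eq_sum_range' (degD j)]
    refine Finset.sum_congr rfl fun i _ => ?_
    rw [pow_mul]
  calc ∑ m ∈ Finset.Icc 1 n, (D j).eval ((m : ℚ) ^ 2)
      = ∑ m ∈ Finset.Icc 1 n, ∑ i ∈ Finset.range (j+2), (D j).coeff i * (m:ℚ) ^ (2*i) :=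
        Finset.sum_congr rfl fun m _ => step m
    _ = ∑ i ∈ Finset.range (j+2), ∑ m ∈ Finset.Icc 1 n, (D j).coeff i * (m:ℚ) ^ (2*i) :=
        Finset.sum_comm
    _ = _ := by
        refine Finset.sum_congr rfl fun i _ => ?_
        rw [S, Finset.mul_sum]

lemma main_id (j n : ℕ) :
    ∑ i ∈ Finset.range (j+2), (D j).coeff i * S (2*i) n = 3 * S 2 n * S 1 n ^ j := by
  rw [← sum_eval, telescope', three_S2, pow_succ]
  ring

theorem key : ∀ j : ℕ, ∃ f : ℚ[X], ∀ n : ℕ, S (2*(j+1)) n = S 2 n * f.eval (S 1 n) := by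
  intro j
  induction j using Nat.strong_induction_on with
  | _ j ih =>
    choose g hg using ih
    set c := (D j).coeff (j+1) with hc
    refine ⟨Polynomial.C c⁻¹ * (Polynomial.C 3 * X ^ j -
      ∑ i ∈ (Finset.range j).attach,
        Polynomial.C ((D j).coeff (i.1+1)) * g i.1 (Finset.mem_range.mp i.2)), fun n => ?_⟩
    have hid := main_id j n
    rw [Finset.sum_range_succ, Finset.sum_range_succ'] at hid
    rw [coeffD_zero j] at hid
    have hsum : ∑ i ∈ Finset.range j, (D j).coeff (i+1) * S (2*(i+1)) n
        = S 2 n * ∑ i ∈ (Finset.range j).attach,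
            (D j).coeff (i.1+1) * (g i.1 (Finset.mem_range.mp i.2)).eval (S 1 n) := by
      rw [Finset.mul_sum, ← Finset.sum_attach (Finset.range j)
        (fun i => (D j).coeff (i+1) * S (2*(i+1)) n)]
      refine Finset.sum_congr rfl fun i _ => ?_
      rw [hg i.1 (Finset.mem_range.mp i.2) n]; ring
    rw [hsum] at hid
    have hcne := coeffD_top_ne j
    simp only [eval_mul, eval_sub, eval_C, eval_pow, eval_X, eval_finset_sum]
    rw [eq_comm, mul_comm (S 2 n), inv_mul_eq_div, div_mul_eq_mul_div, div_eq_iff hcne]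
    linear_combination -hid

end Faul

theorem faulhaber_even (k : ℕ) (hk : 0 < k) (heven : Even k) :
    ∃ f : Polynomial ℚ, ∀ n : ℕ, S k n = S 2 n * f.eval (S 1 n) := by
  obtain ⟨m, hm⟩ := heven
  have hm1 : 1 ≤ m := by omega
  have hk2 : k = 2 * ((m - 1) + 1) := by omega
  rw [hk2]
  exact Faul.key (m - 1)
end

section
/- For any two distinct positive integers i and j, there exists a nonzero polynomial T in two variables with integer coefficients such that T(S_i(n), S_j(n)) = 0 for every natural number n (Beardon's theorem). -/
open Polynomial in
lemma S_eq_range (k : ℕ) (hk : 0 < k) (n : ℕ) :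
    S k n = ∑ m ∈ Finset.range (n + 1), (m : ℚ) ^ k := by
  induction n with
  | zero => simp [S, zero_pow hk.ne']
  | succ n ih =>
      rw [Finset.sum_range_succ, ← ih, S, S,
        Finset.sum_Icc_succ_top (Nat.one_le_iff_ne_zero.mpr (Nat.succ_ne_zero n))]

open Polynomial in
lemma exists_faulhaber (k : ℕ) (hk : 0 < k) :
    ∃ p : ℚ[X], p.natDegree ≤ k + 1 ∧ ∀ n : ℕ, p.eval (n : ℚ) = S k n := by
  refine ⟨C ((k + 1 : ℚ)⁻¹) * ∑ t ∈ Finset.range (k + 1),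
      C (_root_.bernoulli t * ((k + 1).choose t : ℚ)) * (X + 1) ^ (k + 1 - t), ?_, ?_⟩
  · refine (natDegree_C_mul_le _ _).trans ?_
    refine natDegree_sum_le_of_forall_le _ _ fun t _ => ?_
    refine (natDegree_C_mul_le _ _).trans ?_
    refine natDegree_pow_le.trans ?_
    have : (X + 1 : ℚ[X]).natDegree = 1 := by
      simpa using natDegree_X_add_C (1 : ℚ)
    rw [this, mul_one]
    omega
  · intro n
    rw [S_eq_range k hk n]
    have h := _root_.sum_range_pow (n + 1) k
    push_cast at h ⊢
    simp only [eval_mul, eval_C, eval_finset_sum, eval_pow, eval_add, eval_X, eval_one]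
    rw [h, Finset.mul_sum]
    refine Finset.sum_congr rfl fun t _ => ?_
    field_simp

open Polynomial in
theorem beardon_algebraic_relation (i j : ℕ) (hi : 0 < i) (hj : 0 < j) (hij : i ≠ j) :
    ∃ T : MvPolynomial (Fin 2) ℤ, T ≠ 0 ∧
      ∀ n : ℕ, MvPolynomial.aeval ![S i n, S j n] T = 0 := by
  obtain ⟨p, hpdeg, hpev⟩ := exists_faulhaber i hi
  obtain ⟨q, hqdeg, hqev⟩ := exists_faulhaber j hj
  set D1 := i + 1 with hD1
  set D2 := j + 1 with hD2
  set N := 4 * D1 * D2 with hN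
  -- the family of products p^a * q^b
  set f : Fin (2 * D2 + 1) × Fin (2 * D1 + 1) → ℚ[X] :=
    fun x => p ^ (x.1 : ℕ) * q ^ (x.2 : ℕ) with hf
  have hmem : ∀ x, f x ∈ degreeLT ℚ (N + 1) := by
    intro x
    rw [Polynomial.mem_degreeLT]
    have hdeg : (f x).natDegree ≤ N := by
      have h1 : (f x).natDegree ≤ (x.1 : ℕ) * p.natDegree + (x.2 : ℕ) * q.natDegree :=
        natDegree_mul_le.trans (add_le_add natDegree_pow_le natDegree_pow_le)
      have h2 : (x.1 : ℕ) * p.natDegree ≤ (2 * D2) * D1 :=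
        Nat.mul_le_mul (Nat.lt_succ_iff.mp x.1.isLt) hpdeg
      have h3 : (x.2 : ℕ) * q.natDegree ≤ (2 * D1) * D2 :=
        Nat.mul_le_mul (Nat.lt_succ_iff.mp x.2.isLt) hqdeg
      have : 2 * D2 * D1 + 2 * D1 * D2 = N := by rw [hN]; ring
      omega
    calc (f x).degree ≤ ((f x).natDegree : WithBot ℕ) := degree_le_natDegree
      _ < ((N + 1 : ℕ) : WithBot ℕ) := by exact_mod_cast Nat.lt_succ_of_le hdeg
  -- the family cannot be linearly independent by dimension count
  have hnotli : ¬ LinearIndependent ℚ f := by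
    intro hli
    set V := degreeLT ℚ (N + 1)
    have hfin : Module.Finite ℚ V :=
      Module.Finite.equiv (Polynomial.degreeLTEquiv ℚ (N + 1)).symm
    have hrank : Module.finrank ℚ V = N + 1 := by
      rw [(Polynomial.degreeLTEquiv ℚ (N + 1)).finrank_eq]
      simp
    set g : Fin (2 * D2 + 1) × Fin (2 * D1 + 1) → V := fun x => ⟨f x, hmem x⟩ with hg
    have hlig : LinearIndependent ℚ g := by
      apply LinearIndependent.of_comp V.subtype
      exact hli
    have hcard := hlig.fintype_card_le_finrank
    rw [hrank] at hcard
    simp only [Fintype.card_prod, Fintype.card_fin] at hcard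
    have : (2 * D2 + 1) * (2 * D1 + 1) = 4 * D1 * D2 + 2 * D2 + 2 * D1 + 1 := by ring
    omega
  obtain ⟨c, hsum, x0, hx0⟩ := Fintype.not_linearIndependent_iff.mp hnotli
  -- clear denominators
  set d : ℕ := ∏ x : Fin (2 * D2 + 1) × Fin (2 * D1 + 1), (c x).den with hd
  have hdpos : 0 < d := Finset.prod_pos fun x _ => (c x).pos
  have hdvd : ∀ x, (c x).den ∣ d := fun x => Finset.dvd_prod_of_mem _ (Finset.mem_univ x)
  set zc : Fin (2 * D2 + 1) × Fin (2 * D1 + 1) → ℤ :=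
    fun x => (c x).num * ((d / (c x).den : ℕ) : ℤ) with hzc
  have hkey : ∀ x, ((zc x : ℚ)) = c x * d := by
    intro x
    obtain ⟨e, he⟩ := hdvd x
    have hden : ((c x).den : ℚ) ≠ 0 := Nat.cast_ne_zero.mpr (c x).den_nz
    have hmul : (c x) * ((c x).den : ℚ) = (c x).num := by
      nth_rewrite 1 [← Rat.num_div_den (c x)]
      exact div_mul_cancel₀ _ hden
    rw [hzc]
    simp only
    rw [he, Nat.mul_div_cancel_left _ (c x).pos]
    push_cast
    rw [← hmul]
    ring
  -- the integer polynomial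
  set T : MvPolynomial (Fin 2) ℤ :=
    ∑ x : Fin (2 * D2 + 1) × Fin (2 * D1 + 1),
      MvPolynomial.monomial (Finsupp.single 0 (x.1 : ℕ) + Finsupp.single 1 (x.2 : ℕ)) (zc x)
    with hT
  have hinj : Function.Injective
      (fun x : Fin (2 * D2 + 1) × Fin (2 * D1 + 1) =>
        Finsupp.single (0 : Fin 2) (x.1 : ℕ) + Finsupp.single (1 : Fin 2) (x.2 : ℕ)) := by
    intro x y hxy
    have h0 := DFunLike.congr_fun hxy (0 : Fin 2)
    have h1 := DFunLike.congr_fun hxy (1 : Fin 2)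
    simp [Finsupp.single_apply] at h0 h1
    ext
    · exact_mod_cast h0
    · exact_mod_cast h1
  have hzc0 : zc x0 ≠ 0 := by
    intro h
    have : ((zc x0 : ℚ)) = 0 := by rw [h]; simp
    rw [hkey x0] at this
    exact (mul_ne_zero hx0 (by exact_mod_cast hdpos.ne')) this
  have hTne : T ≠ 0 := by
    intro h
    have hcoeff := congrArg (MvPolynomial.coeff
      (Finsupp.single 0 (x0.1 : ℕ) + Finsupp.single 1 (x0.2 : ℕ))) h
    rw [hT] at hcoeff
    rw [MvPolynomial.coeff_sum] at hcoeff
    simp only [MvPolynomial.coeff_monomial, MvPolynomial.coeff_zero] at hcoeff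
    rw [Finset.sum_eq_single x0] at hcoeff
    · rw [if_pos rfl] at hcoeff
      exact hzc0 hcoeff
    · intro x _ hx
      rw [if_neg]
      intro hc
      exact hx (hinj hc)
    · intro h'
      exact absurd (Finset.mem_univ x0) h'
  refine ⟨T, hTne, fun n => ?_⟩
  have hev := congrArg (Polynomial.eval (n : ℚ)) hsum
  simp only [Polynomial.eval_finset_sum, Polynomial.eval_smul, Polynomial.eval_zero,
    smul_eq_mul, hf, Polynomial.eval_mul, Polynomial.eval_pow, hpev, hqev] at hev
  rw [hT, map_sum]
  have haevmon : ∀ x : Fin (2 * D2 + 1) × Fin (2 * D1 + 1),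
      MvPolynomial.aeval ![S i n, S j n]
        (MvPolynomial.monomial (Finsupp.single 0 (x.1 : ℕ) + Finsupp.single 1 (x.2 : ℕ))
          (zc x))
      = (zc x : ℚ) * (S i n ^ (x.1 : ℕ) * S j n ^ (x.2 : ℕ)) := by
    intro x
    rw [MvPolynomial.aeval_monomial]
    rw [Finsupp.prod_add_index (by intros; simp) (by intros; rw [pow_add]),
      Finsupp.prod_single_index (by simp), Finsupp.prod_single_index (by simp)]
    simp [mul_assoc]
  calc (∑ x : Fin (2 * D2 + 1) × Fin (2 * D1 + 1),
          MvPolynomial.aeval ![S i n, S j n]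
            (MvPolynomial.monomial
              (Finsupp.single 0 (x.1 : ℕ) + Finsupp.single 1 (x.2 : ℕ)) (zc x)))
      = ∑ x : Fin (2 * D2 + 1) × Fin (2 * D1 + 1),
          (d : ℚ) * (c x * (S i n ^ (x.1 : ℕ) * S j n ^ (x.2 : ℕ))) := by
        refine Finset.sum_congr rfl fun x _ => ?_
        rw [haevmon x, hkey x]; ring
    _ = (d : ℚ) * ∑ x : Fin (2 * D2 + 1) × Fin (2 * D1 + 1),
          c x * (S i n ^ (x.1 : ℕ) * S j n ^ (x.2 : ℕ)) := by rw [Finset.mul_sum]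
    _ = 0 := by rw [hev]; ring
end
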